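/- Under the stated assumptions, suppose x : [0, τ] → ℝ³ is continuous with ‖x(0)‖ = 1, is differentiable on [0, τ) where it satisfies ẋ(t) = x(t) × (x(t) × ∇U(x(t))), and satisfies x(t)·f_i < ε_i for all t ∈ [0, τ) and all i ∈ {0, 1, …, m}. Then x(τ)·f_i < ε_i for all i; i.e., a trajectory of the baseline guidance flow starting in the eroded free space can never reach the boundary of any augmented forbidden zone, so the eroded free space is forward invariant. -/

import Mathlib

/-!
Since `ẋ ⊥ x`, the trajectory stays on the unit sphere. The artificial potential `U` is a
Lyapunov function of the flow: `d/dt U(x) = ⟪∇U, x × (x × ∇U)⟫ = ⟪x, ∇U⟫² - ‖x‖²‖∇U‖² ≤ 0`.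
On the sphere the attractive part of `U` is nonnegative, so every repulsive term
`k_r φ_i(x(t)·f_i)` stays below `U(x(0))` on `[0, τ)`. As `φ_i(z) → ∞` for `z → ε_i⁻`, the
values `x(t)·f_i` stay below some `z₀ < ε_i`, and by continuity so does `x(τ)·f_i`.
-/

open scoped RealInnerProductSpace

/-- The cross product on `ℝ³` endowed with the Euclidean norm. -/
noncomputable def cross3 (a b : EuclideanSpace ℝ (Fin 3)) : EuclideanSpace ℝ (Fin 3) :=
  (WithLp.equiv 2 (Fin 3 → ℝ)).symm
    (crossProduct ((WithLp.equiv 2 (Fin 3 → ℝ)) a) ((WithLp.equiv 2 (Fin 3 → ℝ)) b))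

/-- The gradient `∇φ` of the repulsive function, parameters `a = ε*`, `b = ε`. -/
noncomputable def gradphi (a b : ℝ) (z : ℝ) : ℝ :=
  if a ≤ z then 2 * (z - a) * Real.log ((b - a) / (b - z)) + (z - a) ^ 2 / (b - z) else 0

/-- The gradient of the artificial potential,
`∇U(x) = −k_a x* + k_r Σ_{i=0}^m ∇φ_i(x·f_i) f_i`. -/
noncomputable def gradU {m : ℕ} (ka kr : ℝ)
    (xstar : EuclideanSpace ℝ (Fin 3)) (f : Fin (m + 1) → EuclideanSpace ℝ (Fin 3))
    (es eb : Fin (m + 1) → ℝ) (x : EuclideanSpace ℝ (Fin 3)) : EuclideanSpace ℝ (Fin 3) :=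
  (-ka) • xstar + kr • ∑ i, gradphi (es i) (eb i) ⟪x, f i⟫ • f i

open Real Set Filter Topology WithLp

lemma inner_cross3_self (a b : EuclideanSpace ℝ (Fin 3)) : ⟪a, cross3 a b⟫ = 0 := by
  simp only [cross3, EuclideanSpace.inner_eq_star_dotProduct, star_trivial, WithLp.equiv_apply,
    WithLp.equiv_symm_apply]
  rw [dotProduct_comm, dot_self_cross]

lemma inner_cross3_cross3_self (x v : EuclideanSpace ℝ (Fin 3)) :
    ⟪v, cross3 x (cross3 x v)⟫ = ⟪x, v⟫ ^ 2 - ‖x‖ ^ 2 * ‖v‖ ^ 2 := by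
  simp only [← real_inner_self_eq_norm_sq, EuclideanSpace.inner_eq_star_dotProduct, star_trivial,
    cross3, WithLp.equiv_apply, WithLp.equiv_symm_apply]
  rw [dotProduct_comm, triple_product_permutation, triple_product_permutation, ← cross_anticomm,
    neg_dotProduct, cross_dot_cross, dotProduct_comm (ofLp v) (ofLp x)]
  ring

lemma inner_cross3_cross3_self_nonpos (x v : EuclideanSpace ℝ (Fin 3)) :
    ⟪v, cross3 x (cross3 x v)⟫ ≤ 0 := by
  rw [inner_cross3_cross3_self, sub_nonpos, ← mul_pow]
  exact sq_le_sq' (neg_le_of_abs_le (abs_real_inner_le_norm x v)) (real_inner_le_norm x v)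

noncomputable def repulsivePotential (a b z : ℝ) : ℝ :=
  if a ≤ z then (z - a) ^ 2 * log ((b - a) / (b - z)) else 0

section RepulsivePotential

variable {a b z : ℝ}

lemma repulsivePotential_nonneg (hz : z < b) : 0 ≤ repulsivePotential a b z := by
  unfold repulsivePotential
  split_ifs with haz
  · exact mul_nonneg (sq_nonneg _) (log_nonneg ((one_le_div (by linarith)).2 (by linarith)))
  · exact le_rfl

lemma hasDerivAt_sq_mul_log_div (hab : a < b) (hz : z < b) :
    HasDerivAt (fun w => (w - a) ^ 2 * log ((b - a) / (b - w)))
      (2 * (z - a) * log ((b - a) / (b - z)) + (z - a) ^ 2 / (b - z)) z := by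
  have hba : b - a ≠ 0 := (sub_pos.2 hab).ne'
  have hbz : b - z ≠ 0 := (sub_pos.2 hz).ne'
  have hsq := ((hasDerivAt_id z).sub_const a).fun_pow 2
  have hquot := (hasDerivAt_const z (b - a)).fun_div ((hasDerivAt_id z).const_sub b) hbz
  have hlog := hquot.log (div_ne_zero hba hbz)
  refine (hsq.fun_mul hlog).congr_deriv ?_
  simp only [id]
  field_simp
  ring

lemma repulsivePotential_eq_zero (hza : z ≤ a) : repulsivePotential a b z = 0 := by
  rcases hza.lt_or_eq with hza | rfl
  · exact if_neg hza.not_ge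
  · simp [repulsivePotential]

lemma repulsivePotential_of_le (haz : a ≤ z) :
    repulsivePotential a b z = (z - a) ^ 2 * log ((b - a) / (b - z)) :=
  if_pos haz

lemma hasDerivWithinAt_repulsivePotential_Iic (hza : z ≤ a) :
    HasDerivWithinAt (repulsivePotential a b) 0 (Iic a) z :=
  (hasDerivWithinAt_const z _ 0).congr_of_mem (fun _ hw => repulsivePotential_eq_zero hw) hza

lemma hasDerivWithinAt_repulsivePotential_Ici (haz : a ≤ z) (hz : z < b) :
    HasDerivWithinAt (repulsivePotential a b) (gradphi a b z) (Ici a) z := by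
  rw [gradphi, if_pos haz]
  exact (hasDerivAt_sq_mul_log_div (haz.trans_lt hz) hz).hasDerivWithinAt.congr_of_mem
    (fun _ hw => repulsivePotential_of_le hw) haz

lemma hasDerivAt_repulsivePotential (hz : z < b) :
    HasDerivAt (repulsivePotential a b) (gradphi a b z) z := by
  rcases lt_trichotomy z a with hza | rfl | haz
  · rw [gradphi, if_neg hza.not_ge]
    exact (hasDerivWithinAt_repulsivePotential_Iic hza.le).hasDerivAt (Iic_mem_nhds hza)
  · have hleft := hasDerivWithinAt_repulsivePotential_Iic (b := b) (le_refl z)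
    rw [show (0 : ℝ) = gradphi z b z by simp [gradphi]] at hleft
    simpa [Iic_union_Ici] using hleft.union (hasDerivWithinAt_repulsivePotential_Ici le_rfl hz)
  · exact (hasDerivWithinAt_repulsivePotential_Ici haz.le hz).hasDerivAt (Ici_mem_nhds haz)

lemma tendsto_repulsivePotential (hab : a < b) :
    Tendsto (repulsivePotential a b) (𝓝[<] b) atTop := by
  have hgap : Tendsto (fun w => b - w) (𝓝[<] b) (𝓝[>] 0) := by
    refine tendsto_nhdsWithin_iff.2 ⟨?_, eventually_nhdsWithin_of_forall fun w hw => ?_⟩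
    · have := ((continuous_sub_left b).tendsto b).mono_left (nhdsWithin_le_nhds (s := Iio b))
      rwa [sub_self] at this
    · exact sub_pos.2 (mem_Iio.1 hw)
  have hlog : Tendsto (fun w => log ((b - a) / (b - w))) (𝓝[<] b) atTop :=
    tendsto_log_atTop.comp ((tendsto_inv_nhdsGT_zero.comp hgap).const_mul_atTop (sub_pos.2 hab))
  have hsq : Tendsto (fun w => (w - a) ^ 2) (𝓝[<] b) (𝓝 ((b - a) ^ 2)) :=
    ((continuous_id.sub continuous_const).pow 2).continuousAt.tendsto.mono_left nhdsWithin_le_nhds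
  refine (hsq.pos_mul_atTop (by nlinarith) hlog).congr' ?_
  filter_upwards [Ioo_mem_nhdsLT hab] with w hw
  exact (repulsivePotential_of_le hw.1.le).symm

end RepulsivePotential

section ArtificialPotential

variable {m : ℕ} (ka kr : ℝ) (xstar : EuclideanSpace ℝ (Fin 3))
  (f : Fin (m + 1) → EuclideanSpace ℝ (Fin 3)) (es eb : Fin (m + 1) → ℝ)

noncomputable def artificialPotential (x : EuclideanSpace ℝ (Fin 3)) : ℝ :=
  ka * (1 - ⟪x, xstar⟫) + kr * ∑ i, repulsivePotential (es i) (eb i) ⟪x, f i⟫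

variable {ka kr xstar f es eb}

lemma hasDerivAt_artificialPotential_comp {γ : ℝ → EuclideanSpace ℝ (Fin 3)}
    {v : EuclideanSpace ℝ (Fin 3)} {t : ℝ} (hγ : HasDerivAt γ v t)
    (hdom : ∀ i, ⟪γ t, f i⟫ < eb i) :
    HasDerivAt (fun s => artificialPotential ka kr xstar f es eb (γ s))
      ⟪gradU ka kr xstar f es eb (γ t), v⟫ t := by
  have hinner (c : EuclideanSpace ℝ (Fin 3)) : HasDerivAt (fun s => ⟪γ s, c⟫) ⟪v, c⟫ t := by
    simpa using hγ.inner ℝ (hasDerivAt_const t c)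
  have hsum := HasDerivAt.fun_sum (u := Finset.univ) fun i _ =>
    (hasDerivAt_repulsivePotential (a := es i) (hdom i)).comp t (hinner (f i))
  refine ((((hinner xstar).const_sub 1).const_mul ka).add (hsum.const_mul kr)).congr_deriv ?_
  simp only [gradU, inner_add_left, real_inner_smul_left, sum_inner]
  simp only [real_inner_comm v]
  ring

lemma mul_repulsivePotential_le_artificialPotential (hka : 0 ≤ ka) (hkr : 0 ≤ kr)
    {x : EuclideanSpace ℝ (Fin 3)} (hx : ‖x‖ ≤ 1) (hxstar : ‖xstar‖ ≤ 1)
    (hdom : ∀ i, ⟪x, f i⟫ < eb i) (i : Fin (m + 1)) :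
    kr * repulsivePotential (es i) (eb i) ⟪x, f i⟫ ≤ artificialPotential ka kr xstar f es eb x := by
  have hattr : 0 ≤ ka * (1 - ⟪x, xstar⟫) :=
    mul_nonneg hka (sub_nonneg.2 ((real_inner_le_norm x xstar).trans
      (mul_le_one₀ hx (norm_nonneg _) hxstar)))
  have hrep : repulsivePotential (es i) (eb i) ⟪x, f i⟫ ≤
      ∑ j, repulsivePotential (es j) (eb j) ⟪x, f j⟫ :=
    Finset.single_le_sum (fun j _ => repulsivePotential_nonneg (hdom j)) (Finset.mem_univ i)
  unfold artificialPotential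
  nlinarith

end ArtificialPotential

lemma norm_eq_of_hasDerivAt_inner_eq_zero {E : Type*} [NormedAddCommGroup E]
    [InnerProductSpace ℝ E] {x v : ℝ → E} {t₀ τ : ℝ} (hcont : ContinuousOn x (Icc t₀ τ))
    (hderiv : ∀ t ∈ Ico t₀ τ, HasDerivAt x (v t) t) (horth : ∀ t ∈ Ico t₀ τ, ⟪x t, v t⟫ = 0) :
    ∀ t ∈ Icc t₀ τ, ‖x t‖ = ‖x t₀‖ := by
  have hsq := constant_of_has_deriv_right_zero (f := fun t => ‖x t‖ ^ 2)
    (hcont.norm.pow 2) fun t ht => by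
      simpa [horth t ht] using ((hderiv t ht).norm_sq).hasDerivWithinAt (s := Ici t)
  exact fun t ht => (sq_eq_sq₀ (norm_nonneg _) (norm_nonneg _)).1 (hsq t ht)

lemma antitoneOn_artificialPotential_flow {m : ℕ} {ka kr : ℝ} {xstar : EuclideanSpace ℝ (Fin 3)}
    {f : Fin (m + 1) → EuclideanSpace ℝ (Fin 3)} {es eb : Fin (m + 1) → ℝ}
    {x : ℝ → EuclideanSpace ℝ (Fin 3)} {t₀ τ : ℝ}
    (hxderiv : ∀ t ∈ Ico t₀ τ,
      HasDerivAt x (cross3 (x t) (cross3 (x t) (gradU ka kr xstar f es eb (x t)))) t)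
    (hfree : ∀ t ∈ Ico t₀ τ, ∀ i, ⟪x t, f i⟫ < eb i) :
    AntitoneOn (fun t => artificialPotential ka kr xstar f es eb (x t)) (Ico t₀ τ) := by
  have hU (t : ℝ) (ht : t ∈ Ico t₀ τ) :
      HasDerivAt (fun s => artificialPotential ka kr xstar f es eb (x s))
        ⟪gradU ka kr xstar f es eb (x t),
          cross3 (x t) (cross3 (x t) (gradU ka kr xstar f es eb (x t)))⟫ t :=
    hasDerivAt_artificialPotential_comp (hxderiv t ht) (hfree t ht)
  exact antitoneOn_of_hasDerivWithinAt_nonpos (convex_Ico t₀ τ)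
    (fun t ht => (hU t ht).continuousAt.continuousWithinAt)
    (fun t ht => (hU t (interior_subset ht)).hasDerivWithinAt)
    (fun t _ => inner_cross3_cross3_self_nonpos (x t) _)

lemma ContinuousWithinAt.lt_of_barrier_le {g φ : ℝ → ℝ} {t₀ τ b C : ℝ} (hτ : t₀ < τ)
    (hg : ContinuousWithinAt g (Ico t₀ τ) τ) (hφ : Tendsto φ (𝓝[<] b) atTop)
    (hlt : ∀ t ∈ Ico t₀ τ, g t < b) (hC : ∀ t ∈ Ico t₀ τ, φ (g t) ≤ C) : g τ < b := by
  obtain ⟨z₀, hz₀, hφz₀⟩ := mem_nhdsLT_iff_exists_Ioo_subset.1 (hφ.eventually_gt_atTop C)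
  have hτ_mem : τ ∈ closure (Ico t₀ τ) := by
    rw [closure_Ico hτ.ne]
    exact right_mem_Icc.2 hτ.le
  have hgz₀ : g τ ≤ z₀ := hg.closure_le hτ_mem continuousWithinAt_const fun t ht =>
    not_lt.1 fun h => (hC t ht).not_gt (hφz₀ ⟨h, hlt t ht⟩)
  exact hgz₀.trans_lt hz₀

theorem eroded_free_space_forward_invariant_general
    (m : ℕ) (ka kr : ℝ) (hka : 0 < ka) (hkr : 0 < kr)
    (xstar : EuclideanSpace ℝ (Fin 3)) (f : Fin (m + 1) → EuclideanSpace ℝ (Fin 3))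
    (hxstar : ‖xstar‖ = 1)
    (es eb : Fin (m + 1) → ℝ) (heseb : ∀ i, es i < eb i)
    (τ : ℝ) (hτ : 0 < τ) (x : ℝ → EuclideanSpace ℝ (Fin 3))
    (hxcont : ContinuousOn x (Set.Icc 0 τ))
    (hx0 : ‖x 0‖ = 1)
    (hxderiv : ∀ t ∈ Set.Ico (0 : ℝ) τ,
      HasDerivAt x (cross3 (x t) (cross3 (x t) (gradU ka kr xstar f es eb (x t)))) t)
    (hfree : ∀ t ∈ Set.Ico (0 : ℝ) τ, ∀ i, ⟪x t, f i⟫ < eb i) :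
    ∀ i, ⟪x τ, f i⟫ < eb i := by
  intro i
  have hnorm : ∀ t ∈ Icc 0 τ, ‖x t‖ = 1 := fun t ht =>
    hx0 ▸ norm_eq_of_hasDerivAt_inner_eq_zero hxcont hxderiv
      (fun t _ => inner_cross3_self _ _) t ht
  have hdecr := antitoneOn_artificialPotential_flow hxderiv hfree
  have hcont : ContinuousWithinAt (fun t => ⟪x t, f i⟫) (Ico 0 τ) τ :=
    ((hxcont τ (right_mem_Icc.2 hτ.le)).mono Ico_subset_Icc_self).inner continuousWithinAt_const
  refine ContinuousWithinAt.lt_of_barrier_le (g := fun t => ⟪x t, f i⟫) hτ hcont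
    (tendsto_repulsivePotential (heseb i))
    (fun t ht => hfree t ht i) (C := artificialPotential ka kr xstar f es eb (x 0) / kr)
    fun t ht => ?_
  rw [le_div_iff₀' hkr]
  calc kr * repulsivePotential (es i) (eb i) ⟪x t, f i⟫
      ≤ artificialPotential ka kr xstar f es eb (x t) :=
        mul_repulsivePotential_le_artificialPotential hka.le hkr.le
          (hnorm t (Ico_subset_Icc_self ht)).le hxstar.le (hfree t ht) i
    _ ≤ artificialPotential ka kr xstar f es eb (x 0) := hdecr (left_mem_Ico.2 hτ) ht ht.1

/-- forward invariance of the eroded free space under the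
baseline guidance flow `ẋ = x × (x × ∇U(x))`: a trajectory that stays in the
eroded free space on `[0, τ)` cannot reach the boundary of any augmented
forbidden zone at time `τ`. -/
theorem eroded_free_space_forward_invariant
    (m : ℕ) (hm : 1 ≤ m) (ka kr : ℝ) (hka : 0 < ka) (hkr : 0 < kr)
    (xstar : EuclideanSpace ℝ (Fin 3)) (f : Fin (m + 1) → EuclideanSpace ℝ (Fin 3))
    (hxstar : ‖xstar‖ = 1) (hf : ∀ i, ‖f i‖ = 1) (hf0 : f 0 = -xstar)
    (es eb : Fin (m + 1) → ℝ) (heseb : ∀ i, es i < eb i) (heb : ∀ i, eb i < 1)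
    (hgoal : ∀ i, ⟪xstar, f i⟫ ≤ es i)
    (τ : ℝ) (hτ : 0 < τ) (x : ℝ → EuclideanSpace ℝ (Fin 3))
    (hxcont : ContinuousOn x (Set.Icc 0 τ))
    (hx0 : ‖x 0‖ = 1)
    (hxderiv : ∀ t ∈ Set.Ico (0 : ℝ) τ,
      HasDerivAt x (cross3 (x t) (cross3 (x t) (gradU ka kr xstar f es eb (x t)))) t)
    (hfree : ∀ t ∈ Set.Ico (0 : ℝ) τ, ∀ i, ⟪x t, f i⟫ < eb i) :
    ∀ i, ⟪x τ, f i⟫ < eb i :=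
  eroded_free_space_forward_invariant_general m ka kr hka hkr xstar f hxstar es eb heseb τ hτ x
    hxcont hx0 hxderiv hfree
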